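/- arXiv:1403.0985 — 4 statements merged into one kernel-verified Lean document; each statement's English description precedes it below -/
import Mathlib

section
/- Let P : [-1,1] → ℝ be continuous with ∫_{-1}^{1} P(t) dt well-defined, P > 0 on a deleted right neighborhood of -1 and P < 0 on a deleted left neighborhood of 1, and suppose P has exactly one root t_0 in (-1,1). Then the function MT(k) = ∫_{-1}^1 P(t)e^{kt} dt satisfies MT'(k) - t_0·MT(k) = ∫_{-1}^1 (t - t_0)P(t)e^{kt} dt < 0 for all k ∈ ℝ, so there is at most one k_0 ∈ ℝ with MT(k_0) = 0. -/
open Real Set intervalIntegral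

theorem MT_unique_zero
    (P : ℝ → ℝ) (hP : ContinuousOn P (Icc (-1) 1))
    (hpos : ∃ δ > 0, ∀ t ∈ Ioo (-1 : ℝ) (-1 + δ), P t > 0)
    (hneg : ∃ δ > 0, ∀ t ∈ Ioo (1 - δ) (1 : ℝ), P t < 0)
    (t₀ : ℝ) (ht₀ : t₀ ∈ Ioo (-1 : ℝ) 1) (hroot : P t₀ = 0)
    (huniq : ∀ t ∈ Ioo (-1 : ℝ) 1, P t = 0 → t = t₀)
    (MT : ℝ → ℝ)
    (hMT : ∀ k, MT k = ∫ t in (-1 : ℝ)..1, P t * Real.exp (k * t)) :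
    (∀ k : ℝ,
      deriv MT k - t₀ * MT k = ∫ t in (-1 : ℝ)..1, (t - t₀) * P t * Real.exp (k * t)) ∧
    (∀ k : ℝ, (∫ t in (-1 : ℝ)..1, (t - t₀) * P t * Real.exp (k * t)) < 0) ∧
    (∀ k₁ k₂ : ℝ, MT k₁ = 0 → MT k₂ = 0 → k₁ = k₂) := by
  obtain ⟨δ₁, hδ₁, hpos'⟩ := hpos
  obtain ⟨δ₂, hδ₂, hneg'⟩ := hneg
  obtain ⟨ht₀l, ht₀r⟩ := ht₀
  -- Sign of P on the left of t₀
  have hPpos : ∀ t ∈ Ioo (-1:ℝ) t₀, 0 < P t := by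
    intro t ht
    by_contra h
    push_neg at h
    rcases h.lt_or_eq with hlt | heq
    · -- find a point s with -1 < s < t, s < -1 + δ₁
      set s : ℝ := -1 + min (t + 1) δ₁ / 2 with hs
      have hm : 0 < min (t + 1) δ₁ := lt_min (by linarith [ht.1]) hδ₁
      have hs1 : -1 < s := by simp only [hs]; linarith
      have hs2 : s < t := by
        have : min (t + 1) δ₁ ≤ t + 1 := min_le_left _ _
        simp only [hs]; linarith
      have hs3 : s < -1 + δ₁ := by
        have : min (t + 1) δ₁ ≤ δ₁ := min_le_right _ _
        simp only [hs]; linarith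
      have hPs : 0 < P s := hpos' s ⟨hs1, hs3⟩
      have hsub : Icc s t ⊆ Icc (-1:ℝ) 1 :=
        Icc_subset_Icc hs1.le (ht.2.trans ht₀r).le
      obtain ⟨r, hr, hPr⟩ := intermediate_value_Ioo' hs2.le (hP.mono hsub) ⟨hlt, hPs⟩
      have hrt₀ : r = t₀ :=
        huniq r ⟨hs1.trans hr.1, (hr.2.trans ht.2).trans ht₀r⟩ hPr
      subst hrt₀
      exact absurd hr.2 (not_lt_of_gt ht.2)
    · exact (ne_of_lt ht.2) (huniq t ⟨ht.1, ht.2.trans ht₀r⟩ heq)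
  -- Sign of P on the right of t₀
  have hPneg : ∀ t ∈ Ioo t₀ (1:ℝ), P t < 0 := by
    intro t ht
    by_contra h
    push_neg at h
    rcases h.lt_or_eq with hlt | heq
    · set s : ℝ := 1 - min (1 - t) δ₂ / 2 with hs
      have hm : 0 < min (1 - t) δ₂ := lt_min (by linarith [ht.2]) hδ₂
      have hs1 : s < 1 := by simp only [hs]; linarith
      have hs2 : t < s := by
        have : min (1 - t) δ₂ ≤ 1 - t := min_le_left _ _
        simp only [hs]; linarith
      have hs3 : 1 - δ₂ < s := by
        have : min (1 - t) δ₂ ≤ δ₂ := min_le_right _ _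
        simp only [hs]; linarith
      have hPs : P s < 0 := hneg' s ⟨hs3, hs1⟩
      have hsub : Icc t s ⊆ Icc (-1:ℝ) 1 :=
        Icc_subset_Icc (ht₀l.trans ht.1).le hs1.le
      obtain ⟨r, hr, hPr⟩ := intermediate_value_Ioo' hs2.le (hP.mono hsub) ⟨hPs, hlt⟩
      have hrt₀ : r = t₀ :=
        huniq r ⟨ht₀l.trans (ht.1.trans hr.1), hr.2.trans hs1⟩ hPr
      subst hrt₀
      exact absurd hr.1 (not_lt_of_gt ht.1)
    · exact (ne_of_gt ht.1) (huniq t ⟨ht₀l.trans ht.1, ht.2⟩ heq.symm)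
  -- Sign at the right endpoint
  have hP1 : P 1 ≤ 0 := by
    have hc : ContinuousWithinAt P (Icc (-1:ℝ) 1) 1 := hP 1 (right_mem_Icc.mpr (by norm_num))
    set a : ℝ := max t₀ (1 - δ₂) with ha
    have ha1 : a < 1 := max_lt ht₀r (by linarith)
    have hsub : Ioo a 1 ⊆ Icc (-1:ℝ) 1 := fun x hx =>
      ⟨le_of_lt (lt_of_lt_of_le ht₀l ((le_max_left t₀ (1-δ₂)).trans hx.1.le)), hx.2.le⟩
    have htend : Filter.Tendsto P (nhdsWithin 1 (Ioo a 1)) (nhds (P 1)) :=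
      hc.mono_left (nhdsWithin_mono _ hsub)
    have hne : (nhdsWithin (1:ℝ) (Ioo a 1)).NeBot := by
      rw [← mem_closure_iff_nhdsWithin_neBot, closure_Ioo (ne_of_lt ha1)]
      exact right_mem_Icc.mpr ha1.le
    refine le_of_tendsto htend ?_
    filter_upwards [self_mem_nhdsWithin] with x hx
    exact (hneg' x ⟨lt_of_le_of_lt (le_max_right _ _) hx.1, hx.2⟩).le
  -- Integrand nonpositivity
  have hle : ∀ k : ℝ, ∀ t ∈ Ioc (-1:ℝ) 1, (t - t₀) * P t * Real.exp (k * t) ≤ 0 := by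
    intro k t ht
    have he : 0 < Real.exp (k * t) := Real.exp_pos _
    rcases lt_trichotomy t t₀ with h | h | h
    · have := hPpos t ⟨ht.1, h⟩
      have : (t - t₀) * P t ≤ 0 := mul_nonpos_of_nonpos_of_nonneg (by linarith) this.le
      exact mul_nonpos_of_nonpos_of_nonneg this he.le
    · simp [h, hroot]
    · rcases eq_or_lt_of_le ht.2 with h1 | h1
      · have : (t - t₀) * P t ≤ 0 := mul_nonpos_of_nonneg_of_nonpos (by linarith) (h1 ▸ hP1)
        exact mul_nonpos_of_nonpos_of_nonneg this he.le
      · have := hPneg t ⟨h, h1⟩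
        have : (t - t₀) * P t ≤ 0 := mul_nonpos_of_nonneg_of_nonpos (by linarith) this.le
        exact mul_nonpos_of_nonpos_of_nonneg this he.le
  -- Continuity of the integrand
  have hcont : ∀ k : ℝ, ContinuousOn (fun t => (t - t₀) * P t * Real.exp (k * t)) (Icc (-1:ℝ) 1) :=
    fun k => ((continuousOn_id.sub continuousOn_const).mul hP).mul
      (Real.continuous_exp.comp (continuous_const.mul continuous_id)).continuousOn
  -- Part 2: strict negativity of the integral
  have part2 : ∀ k : ℝ, (∫ t in (-1 : ℝ)..1, (t - t₀) * P t * Real.exp (k * t)) < 0 := by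
    intro k
    -- a point where the integrand is strictly negative
    set c : ℝ := -1 + min (t₀ + 1) δ₁ / 2 with hc
    have hm : 0 < min (t₀ + 1) δ₁ := lt_min (by linarith) hδ₁
    have hc1 : -1 < c := by simp only [hc]; linarith
    have hc2 : c < t₀ := by
      have : min (t₀ + 1) δ₁ ≤ t₀ + 1 := min_le_left _ _
      simp only [hc]; linarith
    have hc3 : c < -1 + δ₁ := by
      have : min (t₀ + 1) δ₁ ≤ δ₁ := min_le_right _ _
      simp only [hc]; linarith
    have hPc : 0 < P c := hpos' c ⟨hc1, hc3⟩
    have hcneg : (c - t₀) * P c * Real.exp (k * c) < 0 :=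
      mul_neg_of_neg_of_pos (mul_neg_of_neg_of_pos (by linarith) hPc) (Real.exp_pos _)
    have h := intervalIntegral.integral_pos (a := -1) (b := 1)
      (f := fun t => -((t - t₀) * P t * Real.exp (k * t))) (by norm_num)
      ((hcont k).neg) (fun x hx => neg_nonneg.mpr (hle k x hx))
      ⟨c, ⟨hc1.le, (hc2.trans ht₀r).le⟩, by show 0 < -((c - t₀) * P c * Real.exp (k * c)); linarith⟩
    rw [intervalIntegral.integral_neg] at h
    linarith
  -- Derivative of MT
  have hfun : MT = fun k => ∫ t in (-1 : ℝ)..1, P t * Real.exp (k * t) := funext hMT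
  obtain ⟨C, hC⟩ := isCompact_Icc.exists_bound_of_continuousOn hP
  have hC0 : 0 ≤ C := (norm_nonneg (P t₀)).trans (hC t₀ ⟨ht₀l.le, ht₀r.le⟩)
  have hIoc : Set.uIoc (-1:ℝ) 1 = Ioc (-1:ℝ) 1 := uIoc_of_le (by norm_num)
  have hderiv : ∀ k : ℝ, HasDerivAt MT
      (∫ t in (-1 : ℝ)..1, P t * (t * Real.exp (k * t))) k := by
    intro k
    rw [hfun]
    have key := intervalIntegral.hasDerivAt_integral_of_dominated_loc_of_deriv_le
      (μ := MeasureTheory.volume) (a := -1) (b := 1) (x₀ := k) (s := Metric.ball k 1)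
      (F := fun x t => P t * Real.exp (x * t))
      (F' := fun x t => P t * (t * Real.exp (x * t)))
      (bound := fun _ => C * Real.exp (|k| + 1))
      (Metric.ball_mem_nhds k one_pos)
      (Filter.Eventually.of_forall fun x => by
        rw [hIoc]
        exact ((hP.mono Ioc_subset_Icc_self).mul
          (Real.continuous_exp.comp (continuous_const.mul continuous_id)).continuousOn).aestronglyMeasurable measurableSet_Ioc)
      (by
        apply ContinuousOn.intervalIntegrable
        rw [uIcc_of_le (by norm_num : (-1:ℝ) ≤ 1)]
        exact hP.mul (Real.continuous_exp.comp (continuous_const.mul continuous_id)).continuousOn)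
      (by
        rw [hIoc]
        exact ((hP.mono Ioc_subset_Icc_self).mul
          (continuous_id.mul (Real.continuous_exp.comp (continuous_const.mul continuous_id))).continuousOn).aestronglyMeasurable measurableSet_Ioc)
      (Filter.Eventually.of_forall fun t ht x hx => by
        rw [hIoc] at ht
        have h1 : |P t| ≤ C := hC t (Ioc_subset_Icc_self ht)
        have h2 : |t| ≤ 1 := abs_le.mpr ⟨ht.1.le, ht.2⟩
        have hx' : |x| < |k| + 1 := by
          have hd : |x - k| < 1 := by
            simpa [Real.dist_eq] using Metric.mem_ball.mp hx
          have := abs_sub_abs_le_abs_sub x k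
          linarith
        have hxt : x * t ≤ |k| + 1 := by
          calc x * t ≤ |x * t| := le_abs_self _
            _ = |x| * |t| := abs_mul _ _
            _ ≤ (|k| + 1) * 1 := mul_le_mul hx'.le h2 (abs_nonneg _) (by positivity)
            _ = |k| + 1 := by ring
        have h3 : Real.exp (x * t) ≤ Real.exp (|k| + 1) := Real.exp_le_exp.mpr hxt
        calc ‖P t * (t * Real.exp (x * t))‖
            = |P t| * (|t| * Real.exp (x * t)) := by
              rw [Real.norm_eq_abs, abs_mul, abs_mul, abs_of_pos (Real.exp_pos _)]
          _ ≤ C * (1 * Real.exp (|k| + 1)) := by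
              apply mul_le_mul h1 _ (by positivity) hC0
              exact mul_le_mul h2 h3 (Real.exp_pos _).le (by norm_num)
          _ = C * Real.exp (|k| + 1) := by ring)
      intervalIntegrable_const
      (Filter.Eventually.of_forall fun t ht x hx => by
        have h := (((hasDerivAt_id x).mul_const t).exp).const_mul (P t)
        refine h.congr_deriv ?_
        simp only [id_eq]
        ring)
    exact key.2
  -- Part 1
  have part1 : ∀ k : ℝ,
      deriv MT k - t₀ * MT k = ∫ t in (-1 : ℝ)..1, (t - t₀) * P t * Real.exp (k * t) := by
    intro k
    have hd : deriv MT k = ∫ t in (-1 : ℝ)..1, P t * (t * Real.exp (k * t)) :=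
      (hderiv k).deriv
    have hi1 : IntervalIntegrable (fun t => P t * (t * Real.exp (k * t)))
        MeasureTheory.volume (-1) 1 := by
      apply ContinuousOn.intervalIntegrable
      rw [uIcc_of_le (by norm_num : (-1:ℝ) ≤ 1)]
      exact hP.mul (continuous_id.mul (Real.continuous_exp.comp (continuous_const.mul continuous_id))).continuousOn
    have hi2 : IntervalIntegrable (fun t => P t * Real.exp (k * t))
        MeasureTheory.volume (-1) 1 := by
      apply ContinuousOn.intervalIntegrable
      rw [uIcc_of_le (by norm_num : (-1:ℝ) ≤ 1)]
      exact hP.mul (Real.continuous_exp.comp (continuous_const.mul continuous_id)).continuousOn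
    have heq : ∀ t : ℝ, (t - t₀) * P t * Real.exp (k * t)
        = P t * (t * Real.exp (k * t)) - t₀ * (P t * Real.exp (k * t)) := fun t => by ring
    rw [hd, hMT k]
    rw [intervalIntegral.integral_congr (g := fun t =>
        P t * (t * Real.exp (k * t)) - t₀ * (P t * Real.exp (k * t))) (fun t _ => heq t)]
    rw [intervalIntegral.integral_sub hi1 (hi2.const_mul t₀),
      intervalIntegral.integral_const_mul]
  refine ⟨part1, part2, ?_⟩
  -- Part 3
  intro k₁ k₂ h1 h2
  set g : ℝ → ℝ := fun k => Real.exp (-t₀ * k) * MT k with hg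
  have hganti : StrictAnti g := by
    apply strictAnti_of_deriv_neg
    intro k
    have hgd : HasDerivAt g
        (Real.exp (-t₀ * k) * (-t₀ * 1) * MT k
          + Real.exp (-t₀ * k) * (∫ t in (-1 : ℝ)..1, P t * (t * Real.exp (k * t)))) k :=
      ((((hasDerivAt_id k).const_mul (-t₀)).exp)).mul (hderiv k)
    rw [hgd.deriv]
    have hdk : deriv MT k = ∫ t in (-1 : ℝ)..1, P t * (t * Real.exp (k * t)) :=
      (hderiv k).deriv
    have hkey : (∫ t in (-1 : ℝ)..1, P t * (t * Real.exp (k * t))) - t₀ * MT k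
        = ∫ t in (-1 : ℝ)..1, (t - t₀) * P t * Real.exp (k * t) := by
      rw [← hdk]; exact part1 k
    have hneg' := part2 k
    have hexp := Real.exp_pos (-t₀ * k)
    nlinarith [hkey, hneg', hexp]
  have : g k₁ = g k₂ := by simp [hg, h1, h2]
  exact hganti.injective this
end

section
/- For l ≥ 1 and x ∈ (-1,1) with x ≠ 0, the integral ∫_{-1}^{1} t(1+xt)^l dt equals 2·∑_{i=1}^{⌊(l+1)/2⌋} C(l, 2i-1)·x^{2i-1}/(2i+1), and this quantity is nonzero. -/
/-!
Expanding `t * (1 + x t) ^ l` binomially reduces the integral to the moments `∫_{-1}^1 t ^ (k + 1)`,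
which vanish for even `k` and equal `2 / (k + 2)` for odd `k`; writing `k = 2 i - 1` gives the sum.
Multiplying that sum by `x` turns every `x ^ (2 i - 1)` into the square `(x ^ i) ^ 2`, so `x` times the
integral is a sum of nonnegative terms whose first one, `2 l x ^ 2 / 3`, is positive.
-/

open Real Set intervalIntegral

theorem integral_pow_neg_one_one (n : ℕ) :
    ∫ t in (-1 : ℝ)..1, t ^ n = if Even n then (2 / (n + 1) : ℝ) else 0 := by
  rw [integral_pow]
  split_ifs with hn
  · rw [hn.add_one.neg_one_pow]
    norm_num
  · rw [(Nat.not_even_iff_odd.mp hn).add_one.neg_one_pow]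
    norm_num

theorem sum_filter_odd_range {M : Type*} [AddCommMonoid M] (f : ℕ → M) (n : ℕ) :
    ∑ k ∈ (Finset.range (n + 1)).filter Odd, f k =
      ∑ i ∈ Finset.Icc 1 ((n + 1) / 2), f (2 * i - 1) := by
  symm
  refine Finset.sum_nbij' (fun i => 2 * i - 1) (fun k => (k + 1) / 2) ?_ ?_ ?_ ?_ (fun _ _ => rfl)
  · intro i hi
    simp only [Finset.mem_Icc, Finset.mem_filter, Finset.mem_range] at hi ⊢
    exact ⟨by omega, i - 1, by omega⟩
  · intro k hk
    simp only [Finset.mem_Icc, Finset.mem_filter, Finset.mem_range] at hk ⊢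
    obtain ⟨hk, m, rfl⟩ := hk
    omega
  · intro i hi
    simp only [Finset.mem_Icc] at hi
    omega
  · intro k hk
    obtain ⟨-, m, rfl⟩ := Finset.mem_filter.mp hk
    omega

theorem integral_mul_one_add_mul_pow_eq_sum_choose (l : ℕ) (x : ℝ) :
    ∫ t in (-1 : ℝ)..1, t * (1 + x * t) ^ l =
      ∑ k ∈ Finset.range (l + 1), (l.choose k : ℝ) * x ^ k * ∫ t in (-1 : ℝ)..1, t ^ (k + 1) := by
  have expand (t : ℝ) : t * (1 + x * t) ^ l =
      ∑ k ∈ Finset.range (l + 1), (l.choose k : ℝ) * x ^ k * t ^ (k + 1) := by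
    rw [add_comm, add_pow, Finset.mul_sum]
    refine Finset.sum_congr rfl fun k _ => ?_
    ring
  simp_rw [expand]
  rw [integral_finsetSum fun k _ => (continuous_pow (k + 1)).intervalIntegrable _ _ |>.const_mul _]
  simp_rw [integral_const_mul]

theorem integral_mul_one_add_mul_pow (l : ℕ) (x : ℝ) :
    ∫ t in (-1 : ℝ)..1, t * (1 + x * t) ^ l =
      2 * ∑ i ∈ Finset.Icc 1 ((l + 1) / 2),
        (l.choose (2 * i - 1) : ℝ) * x ^ (2 * i - 1) / (2 * i + 1) := by
  simp only [integral_mul_one_add_mul_pow_eq_sum_choose, integral_pow_neg_one_one, Nat.even_add_one,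
    Nat.not_even_iff_odd, mul_ite, mul_zero]
  rw [← Finset.sum_filter, sum_filter_odd_range, Finset.mul_sum]
  refine Finset.sum_congr rfl fun i hi => ?_
  have hi : 1 ≤ i := (Finset.mem_Icc.mp hi).1
  rw [Nat.cast_add_one, Nat.cast_sub (by omega)]
  push_cast
  ring_nf

theorem mul_integral_mul_one_add_mul_pow_pos {l : ℕ} (hl : 1 ≤ l) {x : ℝ} (hx : x ≠ 0) :
    0 < x * ∫ t in (-1 : ℝ)..1, t * (1 + x * t) ^ l := by
  rw [integral_mul_one_add_mul_pow, mul_left_comm, Finset.mul_sum]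
  have hpow {i : ℕ} (hi : i ∈ Finset.Icc 1 ((l + 1) / 2)) : x * x ^ (2 * i - 1) = (x ^ i) ^ 2 := by
    rw [← pow_succ', ← pow_mul]
    congr 1
    simp only [Finset.mem_Icc] at hi
    omega
  have h1 : 1 ∈ Finset.Icc 1 ((l + 1) / 2) := Finset.mem_Icc.mpr ⟨le_rfl, by omega⟩
  refine mul_pos two_pos (Finset.sum_pos' (fun i hi => ?_) ⟨1, h1, ?_⟩)
  · rw [← mul_div_assoc, mul_left_comm, hpow hi]
    positivity
  · rw [← mul_div_assoc, mul_left_comm, hpow h1]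
    have : 0 < l.choose (2 * 1 - 1) := Nat.choose_pos (by omega)
    positivity

theorem koiso_example_integral_general
    (l : ℕ) (hl : 1 ≤ l) (x : ℝ) (hx0 : x ≠ 0) :
    (∫ t in (-1 : ℝ)..1, t * (1 + x * t) ^ l) =
      2 * ∑ i ∈ Finset.Icc 1 ((l + 1) / 2),
        (l.choose (2 * i - 1) : ℝ) * x ^ (2 * i - 1) / (2 * i + 1) ∧
    (∫ t in (-1 : ℝ)..1, t * (1 + x * t) ^ l) ≠ 0 :=
  ⟨integral_mul_one_add_mul_pow l x,
    right_ne_zero_of_mul (mul_integral_mul_one_add_mul_pow_pos hl hx0).ne'⟩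

theorem koiso_example_integral
    (l : ℕ) (hl : 1 ≤ l) (x : ℝ) (hx : x ∈ Ioo (-1 : ℝ) 1) (hx0 : x ≠ 0) :
    (∫ t in (-1 : ℝ)..1, t * (1 + x * t) ^ l) =
      2 * ∑ i ∈ Finset.Icc 1 ((l + 1) / 2),
        (l.choose (2 * i - 1) : ℝ) * x ^ (2 * i - 1) / (2 * i + 1) ∧
    (∫ t in (-1 : ℝ)..1, t * (1 + x * t) ^ l) ≠ 0 :=
  koiso_example_integral_general l hl x hx0
end

section
/- Let ξ be C^1 on [-1,1] with ξ(t_0) = 0 for a unique t_0 ∈ (-1,1), ξ > 0 on (-1,t_0), ξ < 0 on (t_0,1), ξ'(t_0) < 0, and set η(t) = ∫_{-1}^t ξ(s)ds with η(1) = 0. Suppose moreover (log|ξ|)'' < 0 on (-1,t_0)∪(t_0,1). Then ξ(t)^2 - η(t)ξ'(t) > 0 for all t ∈ (-1,1). -/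
/-!
On each side of the root the logarithmic derivative `r = ξ'/ξ` is strictly decreasing, by
log-concavity of `|ξ|`. Fix `t < t₀` and put `c = r t`; then `G = ξ - c η` has
`G' = ξ (r - c) > 0` on `(-1, t)`, so `G t > G (-1) = ξ (-1) ≥ 0`, and
`ξ t ^ 2 - η t ξ' t = ξ t · G t > 0`. For `t > t₀` the same function increases on `(t, 1)`
up to `G 1 = ξ 1 ≤ 0`, which is where `η 1 = 0` enters. At `t₀` the quantity is
`-η t₀ ξ' t₀`, and `η t₀ > 0` because `ξ > 0` before the root.
-/

open Real Set intervalIntegral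

theorem continuousOn_integral_of_continuousOn {f : ℝ → ℝ} {a b : ℝ} (hab : a ≤ b)
    (hf : ContinuousOn f (Icc a b)) : ContinuousOn (fun u => ∫ s in a..u, f s) (Icc a b) := by
  simpa [uIcc_of_le hab] using
    continuousOn_primitive_interval' (hf.intervalIntegrable_of_Icc hab) left_mem_uIcc

theorem hasDerivAt_integral_of_continuousOn {f : ℝ → ℝ} {a b x : ℝ}
    (hf : ContinuousOn f (Icc a b)) (hx : x ∈ Ioo a b) :
    HasDerivAt (fun u => ∫ s in a..u, f s) (f x) x :=
  integral_hasDerivAt_right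
    ((hf.mono (Icc_subset_Icc le_rfl hx.2.le)).intervalIntegrable_of_Icc hx.1.le)
    ((hf.mono Ioo_subset_Icc_self).stronglyMeasurableAtFilter isOpen_Ioo x hx)
    (hf.continuousAt (Icc_mem_nhds hx.1 hx.2))

theorem deriv_log_abs_eq_logDeriv {f : ℝ → ℝ} {x : ℝ} (hf : DifferentiableAt ℝ f x)
    (hx : f x ≠ 0) : deriv (fun y => log |f y|) x = logDeriv f x := by
  simp only [log_abs]
  exact deriv_log_comp_eq_logDeriv hf hx

theorem strictAntiOn_logDeriv_of_deriv_deriv_log_abs_neg {f : ℝ → ℝ} {s : Set ℝ}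
    (hs : IsOpen s) (hs' : Convex ℝ s) (hf : DifferentiableOn ℝ f s)
    (hf₀ : ∀ x ∈ s, f x ≠ 0) (hconc : ∀ x ∈ s, deriv (deriv fun y => log |f y|) x < 0) :
    StrictAntiOn (logDeriv f) s := by
  have hneg : ∀ x ∈ s, deriv (logDeriv f) x < 0 := fun x hx => by
    have hev : (deriv fun y => log |f y|) =ᶠ[nhds x] logDeriv f := by
      filter_upwards [hs.mem_nhds hx] with y hy
      exact deriv_log_abs_eq_logDeriv (hf.differentiableAt (hs.mem_nhds hy)) (hf₀ y hy)
    exact hev.deriv_eq ▸ hconc x hx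
  refine strictAntiOn_of_deriv_neg hs' (fun x hx => ?_) (by rwa [hs.interior_eq])
  exact (differentiableAt_of_deriv_ne_zero (hneg x hx).ne).continuousAt.continuousWithinAt

theorem strictMonoOn_sub_const_mul {f F : ℝ → ℝ} {a b c : ℝ}
    (hf : ContinuousOn f (Icc a b)) (hfd : DifferentiableOn ℝ f (Ioo a b))
    (hF : ContinuousOn F (Icc a b)) (hFd : ∀ x ∈ Ioo a b, HasDerivAt F (f x) x)
    (hc : ∀ x ∈ Ioo a b, c * f x < deriv f x) :
    StrictMonoOn (fun x => f x - c * F x) (Icc a b) := by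
  refine strictMonoOn_of_deriv_pos (convex_Icc a b) (hf.sub (continuousOn_const.mul hF)) fun x hx => ?_
  rw [interior_Icc] at hx
  have hG : HasDerivAt (fun x => f x - c * F x) (deriv f x - c * f x) x :=
    (hfd.differentiableAt (isOpen_Ioo.mem_nhds hx)).hasDerivAt.sub ((hFd x hx).const_mul c)
  rw [hG.deriv, sub_pos]
  exact hc x hx

theorem mul_logDeriv_eq_deriv {f : ℝ → ℝ} {x : ℝ} (hx : f x ≠ 0) :
    f x * logDeriv f x = deriv f x := by
  rw [logDeriv_apply, mul_div_cancel₀ _ hx]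

theorem sq_sub_mul_deriv_eq_mul {f F : ℝ → ℝ} {t : ℝ} (ht : f t ≠ 0) :
    f t ^ 2 - F t * deriv f t = f t * (f t - logDeriv f t * F t) := by
  rw [← mul_logDeriv_eq_deriv ht]
  ring

theorem sq_sub_mul_deriv_pos_of_pos {f F : ℝ → ℝ} {a b t : ℝ} (ht : t ∈ Ioo a b)
    (hf : ContinuousOn f (Icc a b)) (hfd : DifferentiableOn ℝ f (Ioo a b))
    (hF : ContinuousOn F (Icc a b)) (hFd : ∀ x ∈ Ioo a b, HasDerivAt F (f x) x)
    (hFa : F a = 0) (hpos : ∀ x ∈ Ioo a b, 0 < f x)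
    (hconc : ∀ x ∈ Ioo a b, deriv (deriv fun y => log |f y|) x < 0) :
    0 < f t ^ 2 - F t * deriv f t := by
  have hanti := strictAntiOn_logDeriv_of_deriv_deriv_log_abs_neg isOpen_Ioo (convex_Ioo a b)
    hfd (fun x hx => (hpos x hx).ne') hconc
  have hab : a < b := ht.1.trans ht.2
  have hfa : 0 ≤ f a :=
    le_on_closure (fun x hx => (hpos x hx).le) continuousOn_const
      (by rwa [closure_Ioo hab.ne]) (by rw [closure_Ioo hab.ne]; exact left_mem_Icc.2 hab.le)
  have hIcc : Icc a t ⊆ Icc a b := Icc_subset_Icc_right ht.2.le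
  have hIoo : Ioo a t ⊆ Ioo a b := Ioo_subset_Ioo_right ht.2.le
  have hmono := strictMonoOn_sub_const_mul (c := logDeriv f t) (hf.mono hIcc)
      (hfd.mono hIoo) (hF.mono hIcc) (fun x hx => hFd x (hIoo hx)) fun x hx => by
    have hxt : logDeriv f t < logDeriv f x := hanti (hIoo hx) ht hx.2
    rw [← mul_logDeriv_eq_deriv (hpos x (hIoo hx)).ne', mul_comm]
    exact mul_lt_mul_of_pos_left hxt (hpos x (hIoo hx))
  have hG : 0 < f t - logDeriv f t * F t := by
    have := hmono (left_mem_Icc.2 ht.1.le) (right_mem_Icc.2 ht.1.le) ht.1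
    simp only [hFa, mul_zero, sub_zero] at this
    linarith
  rw [sq_sub_mul_deriv_eq_mul (hpos t ht).ne']
  exact mul_pos (hpos t ht) hG

theorem sq_sub_mul_deriv_pos_of_neg {f F : ℝ → ℝ} {a b t : ℝ} (ht : t ∈ Ioo a b)
    (hf : ContinuousOn f (Icc a b)) (hfd : DifferentiableOn ℝ f (Ioo a b))
    (hF : ContinuousOn F (Icc a b)) (hFd : ∀ x ∈ Ioo a b, HasDerivAt F (f x) x)
    (hFb : F b = 0) (hneg : ∀ x ∈ Ioo a b, f x < 0)
    (hconc : ∀ x ∈ Ioo a b, deriv (deriv fun y => log |f y|) x < 0) :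
    0 < f t ^ 2 - F t * deriv f t := by
  have hanti := strictAntiOn_logDeriv_of_deriv_deriv_log_abs_neg isOpen_Ioo (convex_Ioo a b)
    hfd (fun x hx => (hneg x hx).ne) hconc
  have hab : a < b := ht.1.trans ht.2
  have hfb : f b ≤ 0 :=
    le_on_closure (fun x hx => (hneg x hx).le) (by rwa [closure_Ioo hab.ne]) continuousOn_const
      (by rw [closure_Ioo hab.ne]; exact right_mem_Icc.2 hab.le)
  have hIcc : Icc t b ⊆ Icc a b := Icc_subset_Icc_left ht.1.le
  have hIoo : Ioo t b ⊆ Ioo a b := Ioo_subset_Ioo_left ht.1.le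
  have hmono := strictMonoOn_sub_const_mul (c := logDeriv f t) (hf.mono hIcc)
      (hfd.mono hIoo) (hF.mono hIcc) (fun x hx => hFd x (hIoo hx)) fun x hx => by
    have hxt : logDeriv f x < logDeriv f t := hanti ht (hIoo hx) hx.1
    rw [← mul_logDeriv_eq_deriv (hneg x (hIoo hx)).ne, mul_comm]
    exact mul_lt_mul_of_neg_left hxt (hneg x (hIoo hx))
  have hG : f t - logDeriv f t * F t < 0 := by
    have := hmono (left_mem_Icc.2 ht.2.le) (right_mem_Icc.2 ht.2.le) ht.2
    simp only [hFb, mul_zero, sub_zero] at this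
    linarith
  rw [sq_sub_mul_deriv_eq_mul (hneg t ht).ne]
  exact mul_pos_of_neg_of_neg (hneg t ht) hG

theorem xi_sq_minus_eta_xi'_pos
    (ξ : ℝ → ℝ) (hξ : ContDiffOn ℝ 1 ξ (Icc (-1) 1))
    (t₀ : ℝ) (ht₀ : t₀ ∈ Ioo (-1 : ℝ) 1)
    (hroot : ξ t₀ = 0)
    (hpos : ∀ t ∈ Ioo (-1 : ℝ) t₀, ξ t > 0)
    (hneg : ∀ t ∈ Ioo t₀ (1 : ℝ), ξ t < 0)
    (hξ' : deriv ξ t₀ < 0)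
    (η : ℝ → ℝ) (hη : ∀ t, η t = ∫ s in (-1 : ℝ)..t, ξ s)
    (hη1 : η 1 = 0)
    (hlogconc : ∀ t ∈ Ioo (-1 : ℝ) 1, t ≠ t₀ →
      deriv (deriv (fun s => Real.log |ξ s|)) t < 0) :
    ∀ t ∈ Ioo (-1 : ℝ) 1, ξ t ^ 2 - η t * deriv ξ t > 0 := by
  obtain rfl : η = fun t => ∫ s in (-1 : ℝ)..t, ξ s := funext hη
  intro t ht
  have hcont : ContinuousOn ξ (Icc (-1) 1) := hξ.continuousOn
  have hdiff : DifferentiableOn ℝ ξ (Ioo (-1) 1) :=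
    (hξ.differentiableOn one_ne_zero).mono Ioo_subset_Icc_self
  have hηcont := continuousOn_integral_of_continuousOn (by norm_num) hcont
  have hηderiv := fun x (hx : x ∈ Ioo (-1 : ℝ) 1) => hasDerivAt_integral_of_continuousOn hcont hx
  rcases lt_trichotomy t t₀ with hlt | rfl | hgt
  · have hIcc : Icc (-1) t₀ ⊆ Icc (-1 : ℝ) 1 := Icc_subset_Icc_right ht₀.2.le
    have hIoo : Ioo (-1) t₀ ⊆ Ioo (-1 : ℝ) 1 := Ioo_subset_Ioo_right ht₀.2.le
    exact sq_sub_mul_deriv_pos_of_pos ⟨ht.1, hlt⟩ (hcont.mono hIcc) (hdiff.mono hIoo)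
      (hηcont.mono hIcc) (fun x hx => hηderiv x (hIoo hx)) integral_same hpos
      fun x hx => hlogconc x (hIoo hx) hx.2.ne
  · have hη : 0 < ∫ s in (-1 : ℝ)..t, ξ s :=
      intervalIntegral_pos_of_pos_on
        ((hcont.mono (Icc_subset_Icc_right ht.2.le)).intervalIntegrable_of_Icc ht.1.le) hpos ht.1
    rw [hroot]
    nlinarith
  · have hIcc : Icc t₀ 1 ⊆ Icc (-1 : ℝ) 1 := Icc_subset_Icc_left ht₀.1.le
    have hIoo : Ioo t₀ 1 ⊆ Ioo (-1 : ℝ) 1 := Ioo_subset_Ioo_left ht₀.1.le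
    exact sq_sub_mul_deriv_pos_of_neg ⟨hgt, ht.2⟩ (hcont.mono hIcc) (hdiff.mono hIoo)
      (hηcont.mono hIcc) (fun x hx => hηderiv x (hIoo hx)) hη1 hneg
      fun x hx => hlogconc x (hIoo hx) hx.1.ne'
end

section
/- Let p_c(t) = (1+t)^{d_0}(1-t)^{d_∞}∏_{a}(1+x_a t)^{d_a} with 0<|x_a|<1, and define P(t) = 2∫_{-1}^t [(∑_a d_a s_a x_a/(1+x_a s))·p_c(s) - (β_0/α_0)p_c(s)] ds + 2p_c(-1), where α_0 = ∫_{-1}^1 p_c, β_0 = p_c(1)+p_c(-1)+∫_{-1}^1 (∑_a d_a s_a x_a/(1+x_a t))p_c(t)dt. Then P(-1) = 2p_c(-1) and P(1) = -2p_c(1). In particular, if d_0 = 0 then P(-1) > 0, and if d_∞ = 0 then P(1) < 0; if d_0 > 0 then P(-1)=0 and if d_∞ > 0 then P(1) = 0. -/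
/-!
`P (-1)` is the boundary term alone, and `β₀ / α₀` is exactly the constant making
`∫₋₁¹ (g - (β₀ / α₀) pc) = -(pc 1 + pc (-1))`, whence `P 1 = -2 pc 1`. The analytic input is that
`g` is integrable on `[-1, 1]`: the poles of `1 / (1 ± t)` are cancelled by the factors
`(1 ± t) ^ d` of `pc` and `1 + x a t > 0` there, and that `α₀ > 0` since `pc > 0` on `(-1, 1)`.
The sign statements are then read off `pc (±1)`.
-/

open Real Set intervalIntegral
open MeasureTheory (volume)

theorem two_mul_integral_sub_normalized_add {f p : ℝ → ℝ} {a b : ℝ}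
    (hf : IntervalIntegrable f volume a b)
    (hp : IntervalIntegrable p volume a b) (hα : ∫ t in a..b, p t ≠ 0) :
    2 * (∫ u in a..b, (f u - ((p b + p a + ∫ t in a..b, f t) / ∫ t in a..b, p t) * p u))
      + 2 * p a = -2 * p b := by
  rw [integral_sub hf (hp.const_mul _), integral_const_mul, div_mul_cancel₀ _ hα]
  ring

theorem natCast_div_mul_pow {y : ℝ} (hy : y ≠ 0) (n : ℕ) :
    (n : ℝ) / y * y ^ n = n * y ^ (n - 1) := by
  cases n with
  | zero => simp
  | succ k => rw [pow_succ, Nat.add_sub_cancel]; field_simp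

theorem one_add_mul_pos {x t : ℝ} (hx : |x| < 1) (ht : |t| ≤ 1) : 0 < 1 + x * t := by
  have : |x * t| < 1 := by
    rw [abs_mul]; exact mul_lt_one_of_nonneg_of_lt_one_left (abs_nonneg x) hx ht
  linarith [neg_abs_le (x * t)]

section Factors

variable {ι : Type*} [Fintype ι] {x : ι → ℝ}

theorem prod_one_add_mul_pow_pos (hx : ∀ a, |x a| < 1) (d : ι → ℕ) {t : ℝ} (ht : |t| ≤ 1) :
    0 < ∏ a, (1 + x a * t) ^ d a :=
  Finset.prod_pos fun a _ => pow_pos (one_add_mul_pos (hx a) ht) _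

theorem continuousOn_sum_div_one_add_mul (hx : ∀ a, |x a| < 1) (c : ι → ℝ) :
    ContinuousOn (fun t => ∑ a, c a / (1 + x a * t)) (Icc (-1) 1) :=
  continuousOn_finsetSum _ fun a _ => continuousOn_const.div (by fun_prop)
    fun _ ht => (one_add_mul_pos (hx a) (abs_le.mpr ht)).ne'

theorem intervalIntegrable_partialFractionSum_mul (hx : ∀ a, |x a| < 1) (d : ι → ℕ) (s : ι → ℝ)
    (d₀ d_inf : ℕ) (s₀ s_inf : ℝ) :
    IntervalIntegrable (fun t => ((d₀ : ℝ) * s₀ / (1 + t) + (d_inf : ℝ) * s_inf * (-1) / (1 - t)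
        + ∑ a, (d a : ℝ) * s a * x a / (1 + x a * t)) *
        ((1 + t) ^ d₀ * (1 - t) ^ d_inf * ∏ a, (1 + x a * t) ^ d a)) volume (-1) 1 := by
  set W : ℝ → ℝ := fun t => ∏ a, (1 + x a * t) ^ d a
  have hcont : ContinuousOn (fun t => (d₀ * s₀ * (1 + t) ^ (d₀ - 1) * (1 - t) ^ d_inf
      - d_inf * s_inf * (1 + t) ^ d₀ * (1 - t) ^ (d_inf - 1)) * W t
      + (∑ a, (d a : ℝ) * s a * x a / (1 + x a * t)) * ((1 + t) ^ d₀ * (1 - t) ^ d_inf * W t))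
      (Icc (-1) 1) := by
    have : Continuous W := by fun_prop
    exact ((by fun_prop : Continuous _).continuousOn).add
      ((continuousOn_sum_div_one_add_mul hx _).mul (by fun_prop))
  refine (hcont.intervalIntegrable_of_Icc (by norm_num)).congr_uIoo fun t ht => ?_
  rw [uIoo_of_le (by norm_num)] at ht
  have h₀ := natCast_div_mul_pow (by linarith [ht.1] : 1 + t ≠ 0) d₀
  have h_inf := natCast_div_mul_pow (by linarith [ht.2] : 1 - t ≠ 0) d_inf
  linear_combination (s_inf * (1 + t) ^ d₀ * W t) * h_inf - (s₀ * (1 - t) ^ d_inf * W t) * h₀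

end Factors

theorem P_boundary_values
    {ι : Type*} [Fintype ι]
    (d₀ d_inf : ℕ) (s₀ s_inf : ℝ)
    (d : ι → ℕ) (x s : ι → ℝ) (hx : ∀ a, 0 < |x a| ∧ |x a| < 1)
    (pc g P : ℝ → ℝ)
    (hpc : ∀ t, pc t = (1 + t) ^ d₀ * (1 - t) ^ d_inf * ∏ a, (1 + x a * t) ^ d a)
    (hg : ∀ t, g t = ((d₀ : ℝ) * s₀ / (1 + t) + (d_inf : ℝ) * s_inf * (-1) / (1 - t)
        + ∑ a, (d a : ℝ) * s a * x a / (1 + x a * t)) * pc t)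
    (α₀ β₀ : ℝ)
    (hα₀ : α₀ = ∫ t in (-1 : ℝ)..1, pc t)
    (hβ₀ : β₀ = pc 1 + pc (-1) + ∫ t in (-1 : ℝ)..1, g t)
    (hP : ∀ t, P t = 2 * (∫ u in (-1 : ℝ)..t, (g u - (β₀ / α₀) * pc u)) + 2 * pc (-1)) :
    P (-1) = 2 * pc (-1) ∧ P 1 = -2 * pc 1 ∧
    (d₀ = 0 → P (-1) > 0) ∧ (d_inf = 0 → P 1 < 0) ∧
    (d₀ > 0 → P (-1) = 0) ∧ (d_inf > 0 → P 1 = 0) := by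
  have hx' a : |x a| < 1 := (hx a).2
  have hW {t : ℝ} (ht : |t| ≤ 1) := prod_one_add_mul_pow_pos hx' d ht
  have hpc_cont : Continuous pc := by rw [funext hpc]; fun_prop
  have hα₀_pos : 0 < α₀ := by
    refine hα₀ ▸ intervalIntegral_pos_of_pos_on (hpc_cont.intervalIntegrable _ _)
      (fun t ht => ?_) (by norm_num)
    have := hW (abs_le.mpr ⟨ht.1.le, ht.2.le⟩)
    rw [hpc]
    have : 0 < 1 + t := by linarith [ht.1]
    have : 0 < 1 - t := by linarith [ht.2]
    positivity
  have hg_int : IntervalIntegrable g volume (-1) 1 :=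
    (intervalIntegrable_congr fun t _ => by simp only [hg, hpc]).mp
      (intervalIntegrable_partialFractionSum_mul hx' d s d₀ d_inf s₀ s_inf)
  have hP_neg_one : P (-1) = 2 * pc (-1) := by simp [hP]
  have hP_one : P 1 = -2 * pc 1 := by
    rw [hP, hβ₀, hα₀]
    exact two_mul_integral_sub_normalized_add hg_int (hpc_cont.intervalIntegrable _ _)
      (hα₀ ▸ hα₀_pos.ne')
  refine ⟨hP_neg_one, hP_one, fun h => ?_, fun h => ?_, fun h => ?_, fun h => ?_⟩
  · simpa [hP_neg_one, hpc, h] using hW (t := -1) (by norm_num)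
  · simpa [hP_one, hpc, h] using hW (t := 1) (by norm_num)
  · simp [hP_neg_one, hpc, h.ne']
  · simp [hP_one, hpc, h.ne']
end
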